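/- arXiv:1108.4292 — 7 statements merged into one kernel-verified Lean document; each statement's English description precedes it below -/
import Mathlib

section
/- Let X be a nonempty metric space and define the topological Hausdorff dimension dim_tH X as the infimum of all d ∈ [0,∞] such that X has a topological basis 𝒰 with dim_H(∂U) ≤ d−1 for every U ∈ 𝒰 (where dim_H ∅ := −1, i.e. the condition for d < 1 forces all basis elements to have empty boundary). Then dim_tH X ≤ dim_H X, the Hausdorff dimension of X. -/
/-!
By Eilenberg's inequality, if `f : X → ℝ` is Lipschitz and `μH[t + 1] X = 0`, then almost every
level set `f ⁻¹' {r}` is `μH[t]`-null: cover `X` by sets `E n` with `∑ (diam E n) ^ (t + 1)`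
small; each `E n` meets only the levels in an interval of length `≤ K diam (E n)`, so integrating
the induced covers of the level sets over `r` gives a majorant of small integral. Applied to
`f = dist · x` and `t = max (d - 1) 0` for any `d > dimH X`, almost every sphere about `x` is
`μH[t]`-null, hence has dimension `≤ d - 1`, and is empty if `d ≤ 1`. Balls with such radii form a
basis, so `dimTH X ≤ d`.
-/

open TopologicalSpace Set ENNReal NNReal

/-- The topological Hausdorff dimension of a metric space: the infimum of all `d ∈ [0,∞]`
such that the space has a topological basis all of whose members `U` satisfy
`dimH (frontier U) ≤ d - 1` (with the convention that for `d < 1` this forces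
`frontier U = ∅`, i.e. `dimH ∅ = -1`). -/
noncomputable def dimTH (X : Type*) [EMetricSpace X] : ℝ≥0∞ :=
  ⨅ (d : ℝ≥0∞) (_ : ∃ B : Set (Set X), IsTopologicalBasis B ∧
      ∀ U ∈ B, frontier U = ∅ ∨ dimH (frontier U) + 1 ≤ d), d

open MeasureTheory Metric

section UpperIntegral

variable {α : Type*} [MeasurableSpace α] {μ : Measure α}

lemma ae_eq_zero_of_forall_le_measurable_lintegral_le {F : α → ℝ≥0∞}
    (h : ∀ ε : ℝ≥0∞, 0 < ε → ∃ g : α → ℝ≥0∞, Measurable g ∧ F ≤ g ∧ ∫⁻ a, g a ∂μ ≤ ε) :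
    F =ᵐ[μ] 0 := by
  choose g hg_meas hFg hg_int using fun n : ℕ => h (n : ℝ≥0∞)⁻¹ (by simp)
  have hint : ∫⁻ a, ⨅ n, g n a ∂μ = 0 := by
    refine le_antisymm (ge_of_tendsto' ENNReal.tendsto_inv_nat_nhds_zero fun n => ?_) zero_le
    exact (lintegral_mono fun a => iInf_le _ n).trans (hg_int n)
  filter_upwards [(lintegral_eq_zero_iff (Measurable.iInf hg_meas)).1 hint] with a ha
  exact le_antisymm ((le_iInf fun n => hFg n a).trans ha.le) zero_le

end UpperIntegral

section Eilenberg

variable {X : Type*} [MetricSpace X]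

noncomputable def hausdorffPremeasure (t : ℝ) (δ : ℝ≥0∞) (s : Set X) : ℝ≥0∞ :=
  ⨅ (E : ℕ → Set X) (_ : s ⊆ ⋃ n, E n) (_ : ∀ n, ediam (E n) ≤ δ),
    ∑' n, ⨆ _ : (E n).Nonempty, ediam (E n) ^ t

lemma hausdorffPremeasure_anti {t : ℝ} {s : Set X} {δ₁ δ₂ : ℝ≥0∞} (h : δ₁ ≤ δ₂) :
    hausdorffPremeasure t δ₂ s ≤ hausdorffPremeasure t δ₁ s :=
  le_iInf fun E => le_iInf₂ fun hs hE =>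
    iInf_le_of_le E <| iInf₂_le_of_le hs (fun n => (hE n).trans h) le_rfl

lemma hausdorffPremeasure_le_tsum_indicator {f : X → ℝ} {t : ℝ} (ht : 0 ≤ t) {δ : ℝ≥0∞}
    {s : Set X} {E : ℕ → Set X} (hs : s ⊆ ⋃ n, E n) (hE : ∀ n, ediam (E n) ≤ δ) (r : ℝ) :
    hausdorffPremeasure t δ (s ∩ f ⁻¹' {r}) ≤
      ∑' n, (closure (f '' E n)).indicator (fun _ => ediam (E n) ^ t) r := by
  refine (iInf_le_of_le (fun n => E n ∩ f ⁻¹' {r}) <| iInf₂_le ?_ fun n =>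
    (ediam_mono inter_subset_left).trans (hE n)).trans
    (ENNReal.tsum_le_tsum fun n => iSup_le fun ⟨y, hyE, hyr⟩ => ?_)
  · rintro y ⟨hys, hyr⟩
    obtain ⟨n, hn⟩ := mem_iUnion.1 (hs hys)
    exact mem_iUnion.2 ⟨n, hn, hyr⟩
  · have hr : r ∈ closure (f '' E n) := subset_closure ⟨y, hyE, hyr⟩
    rw [indicator_of_mem hr]
    exact ENNReal.rpow_le_rpow (ediam_mono inter_subset_left) ht

lemma lintegral_tsum_indicator_le {f : X → ℝ} {K : ℝ≥0} (hf : LipschitzWith K f) {t : ℝ}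
    (ht : 0 ≤ t) (E : ℕ → Set X) :
    ∫⁻ r, ∑' n, (closure (f '' E n)).indicator (fun _ => ediam (E n) ^ t) r ≤
      K * ∑' n, ⨆ _ : (E n).Nonempty, ediam (E n) ^ (t + 1) := by
  rw [lintegral_tsum fun n => (measurable_const.indicator isClosed_closure.measurableSet
    ).aemeasurable, ← ENNReal.tsum_mul_left]
  refine ENNReal.tsum_le_tsum fun n => ?_
  rw [lintegral_indicator_const isClosed_closure.measurableSet]
  rcases (E n).eq_empty_or_nonempty with hE | hE
  · simp [hE]
  have hvol : volume (closure (f '' E n)) ≤ K * ediam (E n) :=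
    calc volume (closure (f '' E n)) ≤ ediam (closure (f '' E n)) := Real.volume_le_diam _
      _ = ediam (f '' E n) := ediam_closure _
      _ ≤ K * ediam (E n) := hf.ediam_image_le _
  calc ediam (E n) ^ t * volume (closure (f '' E n)) ≤ ediam (E n) ^ t * (K * ediam (E n)) :=
        mul_le_mul_right hvol _
    _ = K * ⨆ _ : (E n).Nonempty, ediam (E n) ^ (t + 1) := by
        rw [iSup_pos hE, ENNReal.rpow_add_of_nonneg _ _ ht zero_le_one, ENNReal.rpow_one]
        ring

variable [MeasurableSpace X] [BorelSpace X]

lemma hausdorffMeasure_eq_iSup_hausdorffPremeasure (t : ℝ) (s : Set X) :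
    μH[t] s = ⨆ (δ : ℝ≥0∞) (_ : 0 < δ), hausdorffPremeasure t δ s :=
  Measure.hausdorffMeasure_apply t s

lemma hausdorffPremeasure_eq_zero {t : ℝ} {s : Set X} (hs : μH[t] s = 0) {δ : ℝ≥0∞}
    (hδ : 0 < δ) : hausdorffPremeasure t δ s = 0 := by
  rw [hausdorffMeasure_eq_iSup_hausdorffPremeasure] at hs
  exact le_antisymm
    ((le_iSup₂ (f := fun δ (_ : 0 < δ) => hausdorffPremeasure t δ s) δ hδ).trans hs.le) zero_le

lemma hausdorffMeasure_eq_zero_of_hausdorffPremeasure {t : ℝ} {s : Set X}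
    (h : ∀ n : ℕ, hausdorffPremeasure t (n : ℝ≥0∞)⁻¹ s = 0) : μH[t] s = 0 := by
  rw [hausdorffMeasure_eq_iSup_hausdorffPremeasure]
  refine le_antisymm (iSup₂_le fun δ hδ => ?_) zero_le
  obtain ⟨n, hn⟩ := ENNReal.exists_inv_nat_lt hδ.ne'
  exact (hausdorffPremeasure_anti hn.le).trans_eq (h n)

/-- Eilenberg's inequality `∫* H^t_δ(s ∩ f⁻¹{r}) dr ≤ K H^{t+1}_δ(s)`, with vanishing right-hand
side. -/
theorem ae_hausdorffMeasure_inter_preimage_eq_zero {f : X → ℝ} {K : ℝ≥0}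
    (hf : LipschitzWith K f) {t : ℝ} (ht : 0 ≤ t) {s : Set X} (hs : μH[t + 1] s = 0) :
    ∀ᵐ r, μH[t] (s ∩ f ⁻¹' {r}) = 0 := by
  have hpre : ∀ δ : ℝ≥0∞, 0 < δ → ∀ᵐ r, hausdorffPremeasure t δ (s ∩ f ⁻¹' {r}) = 0 := by
    intro δ hδ
    refine ae_eq_zero_of_forall_le_measurable_lintegral_le fun ε hε => ?_
    have hlt : hausdorffPremeasure (t + 1) δ s < ε / K := by
      rw [hausdorffPremeasure_eq_zero hs hδ]
      simpa using hε.ne'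
    obtain ⟨E, hsE, hE, hsum⟩ := by simpa only [hausdorffPremeasure, iInf_lt_iff] using hlt
    refine ⟨_, Measurable.tsum fun n => measurable_const.indicator
      isClosed_closure.measurableSet, hausdorffPremeasure_le_tsum_indicator ht hsE hE,
      (lintegral_tsum_indicator_le hf ht E).trans ?_⟩
    exact (mul_le_mul_right hsum.le _).trans ENNReal.mul_div_le
  filter_upwards [ae_all_iff.2 fun n : ℕ => hpre _ (ENNReal.inv_pos.2 (ENNReal.natCast_ne_top n))]
    with r hr
  exact hausdorffMeasure_eq_zero_of_hausdorffPremeasure hr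

lemma ae_hausdorffMeasure_sphere_eq_zero (x : X) {t : ℝ} (ht : 0 ≤ t)
    (h : μH[t + 1] (univ : Set X) = 0) : ∀ᵐ r, μH[t] (sphere x r) = 0 := by
  filter_upwards [ae_hausdorffMeasure_inter_preimage_eq_zero (LipschitzWith.dist_left x) ht h]
    with r hr
  rwa [univ_inter] at hr

lemma eq_empty_of_hausdorffMeasure_zero_eq_zero {s : Set X} (h : μH[0] s = 0) : s = ∅ :=
  eq_empty_of_forall_notMem fun x hx => by
    simpa [Measure.hausdorffMeasure_zero_singleton] using
      (measure_mono (μ := μH[0]) (singleton_subset_iff.2 hx)).trans_eq h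

end Eilenberg

lemma isTopologicalBasis_balls_of_ae {X : Type*} [MetricSpace X] (P : X → ℝ → Prop)
    (hP : ∀ x, ∀ᵐ r, P x r) :
    IsTopologicalBasis {U : Set X | ∃ x r, 0 < r ∧ P x r ∧ ball x r = U} := by
  refine isTopologicalBasis_of_isOpen_of_nhds ?_ fun x u hxu hu => ?_
  · rintro _ ⟨x, r, -, -, rfl⟩
    exact isOpen_ball
  obtain ⟨ε, hε, hεu⟩ := Metric.isOpen_iff.1 hu x hxu
  have : (ae (volume.restrict (Ioo (0 : ℝ) ε))).NeBot := ae_neBot.2 (by simp [hε])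
  have hae : ∀ᵐ r ∂volume.restrict (Ioo 0 ε), r ∈ Ioo 0 ε ∧ P x r :=
    (ae_restrict_mem measurableSet_Ioo).and (ae_restrict_of_ae (hP x))
  obtain ⟨r, hr, hPr⟩ := hae.exists
  exact ⟨ball x r, ⟨x, r, hr.1, hPr, rfl⟩, mem_ball_self hr.1,
    (ball_subset_ball hr.2.le).trans hεu⟩

lemma dimTH_le_of_dimH_lt {X : Type*} [MetricSpace X] {d : ℝ≥0}
    (hd : dimH (univ : Set X) < d) : dimTH X ≤ d := by
  borelize X
  -- `t = max (d - 1) 0`: for `d ≤ 1` the spheres are `μH[0]`-null, i.e. empty.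
  set t : ℝ≥0 := d - 1
  have hnull : μH[(t : ℝ) + 1] (univ : Set X) = 0 := by
    exact_mod_cast hausdorffMeasure_of_dimH_lt (hd.trans_le (by exact_mod_cast le_tsub_add))
  refine iInf₂_le (d : ℝ≥0∞) ⟨_, isTopologicalBasis_balls_of_ae _
    fun x => ae_hausdorffMeasure_sphere_eq_zero x t.2 hnull, ?_⟩
  rintro _ ⟨x, r, -, hr, rfl⟩
  have hfr : μH[t] (frontier (ball x r)) = 0 := measure_mono_null frontier_ball_subset_sphere hr
  rcases le_total d 1 with hd1 | hd1
  · rw [show t = 0 from tsub_eq_zero_of_le hd1, NNReal.coe_zero] at hfr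
    exact Or.inl (eq_empty_of_hausdorffMeasure_zero_eq_zero hfr)
  · refine Or.inr ?_
    calc dimH (frontier (ball x r)) + 1 ≤ t + 1 := by
          gcongr
          exact dimH_le_of_hausdorffMeasure_ne_top (by simp [hfr])
      _ = d := by exact_mod_cast tsub_add_cancel_of_le hd1

theorem stmt0_general (X : Type*) [MetricSpace X] :
    dimTH X ≤ dimH (Set.univ : Set X) := by
  refine le_of_forall_gt_imp_ge_of_dense fun d hd => ?_
  rcases eq_or_ne d ∞ with rfl | hd_top
  · exact le_top
  lift d to ℝ≥0 using hd_top
  exact dimTH_le_of_dimH_lt hd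

theorem stmt0 (X : Type*) [MetricSpace X] [Nonempty X] :
    dimTH X ≤ dimH (Set.univ : Set X) :=
  stmt0_general X
end

section
/- If Y is a metric space, X ⊆ Y is a subspace, and 𝒰 is a topological basis of Y, then {U ∩ X : U ∈ 𝒰} is a topological basis of X and the boundary of U ∩ X relative to X is contained in the boundary of U relative to Y. Consequently the topological Hausdorff dimension is monotone: dim_tH X ≤ dim_tH Y. -/
open TopologicalSpace Set ENNReal NNReal MeasureTheory

/-!
An inducing map `f : X → Y` pulls a basis `B` of `Y` back to the basis `{f ⁻¹' U | U ∈ B}` of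
`X`, and by continuity `frontier (f ⁻¹' U) ⊆ f ⁻¹' frontier U`. If `f` is moreover
antilipschitz, preimages do not increase Hausdorff dimension, so every bound
`dimH (frontier U) + 1 ≤ d` witnessed in `Y` is inherited by the pulled-back basis of `X`.
-/

section Pullback

variable {X Y : Type*}

theorem TopologicalSpace.IsTopologicalBasis.preimage_of_isInducing [TopologicalSpace X]
    [TopologicalSpace Y] {B : Set (Set Y)} (hB : IsTopologicalBasis B) {f : X → Y}
    (hf : Topology.IsInducing f) : IsTopologicalBasis {V : Set X | ∃ U ∈ B, V = f ⁻¹' U} := by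
  convert hB.isInducing hf using 1
  ext V
  simp only [mem_ofPred_eq, mem_image, eq_comm]

variable [EMetricSpace X] [EMetricSpace Y] {f : X → Y} {K : ℝ≥0}

theorem dimH_frontier_preimage_le (hfc : Continuous f) (hf : AntilipschitzWith K f)
    (U : Set Y) : dimH (frontier (f ⁻¹' U)) ≤ dimH (frontier U) :=
  (dimH_mono (hfc.frontier_preimage_subset U)).trans (hf.dimH_preimage_le _)

theorem dimTH_le_of_isInducing_of_antilipschitz (hfi : Topology.IsInducing f)
    (hf : AntilipschitzWith K f) : dimTH X ≤ dimTH Y := by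
  refine le_iInf₂ fun d ⟨B, hB, hBd⟩ => iInf₂_le d ⟨_, hB.preimage_of_isInducing hfi, ?_⟩
  rintro V ⟨U, hU, rfl⟩
  rcases hBd U hU with hempty | hdim
  · left
    simpa [hempty] using hfi.continuous.frontier_preimage_subset U
  · exact .inr <| le_trans (by gcongr; exact dimH_frontier_preimage_le hfi.continuous hf U) hdim

end Pullback

/-- Monotonicity of the topological Hausdorff dimension: a basis of `Y` restricts to a
basis of a subspace `X ⊆ Y` with smaller relative boundaries, and `dimTH X ≤ dimTH Y`. -/
theorem stmt1 (Y : Type*) [MetricSpace Y] (X : Set Y)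
    (B : Set (Set Y)) (hB : IsTopologicalBasis B) :
    IsTopologicalBasis {V : Set X | ∃ U ∈ B, V = ((↑) : X → Y) ⁻¹' U} ∧
    (∀ U ∈ B, frontier (((↑) : X → Y) ⁻¹' U) ⊆ ((↑) : X → Y) ⁻¹' (frontier U)) ∧
    dimTH X ≤ dimTH Y :=
  ⟨hB.preimage_of_isInducing .subtypeVal,
    fun U _ => continuous_subtype_val.frontier_preimage_subset U,
    dimTH_le_of_isInducing_of_antilipschitz .subtypeVal isometry_subtype_coe.antilipschitz⟩
end

section
/- Let X be a metric space and f : X → ℝ be Lipschitz with Lipschitz constant at most 1. If s ≥ 1 and the s-dimensional Hausdorff measure of X is zero, then for Lebesgue-almost every y ∈ ℝ the (s−1)-dimensional Hausdorff measure of the fiber f⁻¹(y) is zero. -/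
/-!
Cover `X` by sets `tₙ` of small diameter with `∑ diam (tₙ) ^ s` small. The sets `tₙ` whose image
under `f` has `y` in its closure cover the fiber `f ⁻¹' {y}`, so `μH[s - 1] (f ⁻¹' {y})` is
controlled by `g y = ∑ diam (tₙ) ^ (s - 1) · 1[y ∈ closure (f '' tₙ)]`. As `f '' tₙ` has length
at most `diam tₙ`, the integral of `g` is at most `∑ diam (tₙ) ^ s`. Fatou's lemma along a
sequence of finer and finer covers shows that the `liminf` of the functions `g` is a.e. zero.
-/

open Set Filter Topology ENNReal NNReal MeasureTheory Metric

namespace MeasureTheory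

variable {X : Type*} [EMetricSpace X]

noncomputable def fiberCoverSum (f : X → ℝ) (d : ℝ) (t : ℕ → Set X) (y : ℝ) : ℝ≥0∞ :=
  ∑' n, (closure (f '' t n)).indicator (fun _ => ediam (t n) ^ d) y

theorem measurable_fiberCoverSum (f : X → ℝ) (d : ℝ) (t : ℕ → Set X) :
    Measurable (fiberCoverSum f d t) :=
  Measurable.tsum fun _ => measurable_const.indicator isClosed_closure.measurableSet

theorem lintegral_fiberCoverSum_le {K : ℝ≥0} {f : X → ℝ} (hf : LipschitzWith K f) {d : ℝ}
    (hd : 0 ≤ d) (t : ℕ → Set X) :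
    ∫⁻ y, fiberCoverSum f d t y ≤ K * ∑' n, ediam (t n) ^ (d + 1) := by
  unfold fiberCoverSum
  rw [lintegral_tsum fun _ =>
    (measurable_const.indicator isClosed_closure.measurableSet).aemeasurable,
    ← ENNReal.tsum_mul_left]
  refine ENNReal.tsum_le_tsum fun n => ?_
  rw [lintegral_indicator_const isClosed_closure.measurableSet]
  have hvolume : volume (closure (f '' t n)) ≤ K * ediam (t n) :=
    calc volume (closure (f '' t n)) ≤ ediam (closure (f '' t n)) := Real.volume_le_diam _
      _ = ediam (f '' t n) := ediam_closure _
      _ ≤ K * ediam (t n) := hf.ediam_image_le _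
  calc ediam (t n) ^ d * volume (closure (f '' t n)) ≤ ediam (t n) ^ d * (K * ediam (t n)) := by
        gcongr
    _ = K * ediam (t n) ^ (d + 1) := by
        rw [ENNReal.rpow_add_of_nonneg _ _ hd zero_le_one, ENNReal.rpow_one]; ring

variable [MeasurableSpace X] [BorelSpace X]

theorem exists_cover_tsum_ediam_rpow_lt {s : ℝ} (hs : 0 < s) {A : Set X} (hA : μH[s] A = 0)
    {r ε : ℝ≥0∞} (hr : 0 < r) (hε : 0 < ε) :
    ∃ t : ℕ → Set X, A ⊆ ⋃ n, t n ∧ (∀ n, ediam (t n) ≤ r) ∧ ∑' n, ediam (t n) ^ s < ε := by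
  rw [Measure.hausdorffMeasure_apply] at hA
  have hcovers : (⨅ (t : ℕ → Set X) (_ : A ⊆ ⋃ n, t n) (_ : ∀ n, ediam (t n) ≤ r),
      ∑' n, ⨆ _ : (t n).Nonempty, ediam (t n) ^ s) < ε :=
    (le_iSup₂_of_le r hr le_rfl).trans_lt (hA ▸ hε)
  simp only [iInf_lt_iff] at hcovers
  obtain ⟨t, htA, htr, hsum⟩ := hcovers
  refine ⟨t, htA, htr, (ENNReal.tsum_le_tsum fun n => ?_).trans_lt hsum⟩
  rcases (t n).eq_empty_or_nonempty with hempty | hne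
  · simp [hempty, ENNReal.zero_rpow_of_pos hs]
  · exact le_iSup (fun _ : (t n).Nonempty => ediam (t n) ^ s) hne

theorem hausdorffMeasure_inter_preimage_singleton_le_liminf (f : X → ℝ) (d : ℝ) {A : Set X}
    {r : ℕ → ℝ≥0∞} (hr : Tendsto r atTop (𝓝 0)) {t : ℕ → ℕ → Set X}
    (htr : ∀ k n, ediam (t k n) ≤ r k) (htA : ∀ k, A ⊆ ⋃ n, t k n) (y : ℝ) :
    μH[d] (A ∩ f ⁻¹' {y}) ≤ liminf (fun k => fiberCoverSum f d (t k) y) atTop := by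
  let hits (k : ℕ) : Set ℕ := {n | y ∈ closure (f '' t k n)}
  have hcover : ∀ k, A ∩ f ⁻¹' {y} ⊆ ⋃ n : hits k, t k n := by
    rintro k x ⟨hxA, rfl⟩
    obtain ⟨n, hxn⟩ := mem_iUnion.mp (htA k hxA)
    exact mem_iUnion.mpr ⟨⟨n, subset_closure (mem_image_of_mem f hxn)⟩, hxn⟩
  refine (Measure.hausdorffMeasure_le_liminf_tsum d _ r hr (fun k (n : hits k) => t k n)
    (.of_forall fun k n => htr k n) (.of_forall hcover)).trans_eq ?_
  congr 1 with k
  rw [tsum_subtype (hits k) fun n => ediam (t k n) ^ d, fiberCoverSum]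
  rfl

theorem ae_hausdorffMeasure_inter_preimage_singleton_eq_zero {K : ℝ≥0} {f : X → ℝ}
    (hf : LipschitzWith K f) {s : ℝ} (hs : 1 ≤ s) {A : Set X} (hA : μH[s] A = 0) :
    ∀ᵐ y, μH[s - 1] (A ∩ f ⁻¹' {y}) = 0 := by
  have hpos (k : ℕ) : 0 < (k : ℝ≥0∞)⁻¹ := ENNReal.inv_pos.mpr (natCast_ne_top k)
  choose t htA htr hsum using fun k =>
    exists_cover_tsum_ediam_rpow_lt (by linarith) hA (hpos k) (hpos k)
  set g := fun k => fiberCoverSum f (s - 1) (t k)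
  have hg_meas (k : ℕ) : Measurable (g k) := measurable_fiberCoverSum f _ _
  have hg_int (k : ℕ) : ∫⁻ y, g k y ≤ K * (k : ℝ≥0∞)⁻¹ := by
    refine (lintegral_fiberCoverSum_le hf (sub_nonneg.mpr hs) (t k)).trans ?_
    rw [sub_add_cancel]
    gcongr
    exact (hsum k).le
  have hbound : Tendsto (fun k : ℕ => (K : ℝ≥0∞) * (k : ℝ≥0∞)⁻¹) atTop (𝓝 0) := by
    simpa using ENNReal.Tendsto.const_mul ENNReal.tendsto_inv_nat_nhds_zero (.inr coe_ne_top)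
  have hliminf : ∫⁻ y, liminf (fun k => g k y) atTop = 0 :=
    nonpos_iff_eq_zero.mp <| calc
      ∫⁻ y, liminf (fun k => g k y) atTop ≤ liminf (fun k => ∫⁻ y, g k y) atTop :=
        lintegral_liminf_le hg_meas
      _ ≤ liminf (fun k : ℕ => (K : ℝ≥0∞) * (k : ℝ≥0∞)⁻¹) atTop :=
        liminf_le_liminf (.of_forall hg_int)
      _ = 0 := hbound.liminf_eq
  filter_upwards [(lintegral_eq_zero_iff (Measurable.liminf hg_meas)).mp hliminf] with y hy
  exact nonpos_iff_eq_zero.mp <|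
    (hausdorffMeasure_inter_preimage_singleton_le_liminf f (s - 1)
      ENNReal.tendsto_inv_nat_nhds_zero htr htA y).trans_eq hy

end MeasureTheory

/-- Coarea consequence: if `f : X → ℝ` is `1`-Lipschitz, `s ≥ 1`, and the `s`-dimensional
Hausdorff measure of `X` vanishes, then for Lebesgue-a.e. `y ∈ ℝ` the `(s-1)`-dimensional
Hausdorff measure of the fiber `f ⁻¹ {y}` vanishes. -/
theorem stmt3 (X : Type*) [MetricSpace X] [MeasurableSpace X] [BorelSpace X]
    (f : X → ℝ) (hf : LipschitzWith 1 f) (s : ℝ) (hs : 1 ≤ s)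
    (hX : μH[s] (Set.univ : Set X) = 0) :
    ∀ᵐ y : ℝ, μH[s - 1] (f ⁻¹' {y}) = 0 := by
  simpa using ae_hausdorffMeasure_inter_preimage_singleton_eq_zero hf hs hX
end

section
/- There exists a compact set K ⊆ ℝ homeomorphic to the Cantor set and a Lipschitz surjection f : K → [0,1]. Consequently, a one-to-one assumption cannot be dropped: there is a compact metric space K with dim_tH K = 0 and a Lipschitz map f on K with dim_tH f(K) = 1 > dim_tH K. -/
open TopologicalSpace Set ENNReal NNReal MeasureTheory

/-! The binary map `x ↦ ∑ xₙ 2⁻⁽ⁿ⁺¹⁾` from Cantor space onto `[0,1]` is continuous and monotone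
for the lexicographic order, but not injective. Adding the strictly monotone map `x ↦ ∑ xₙ 3⁻ⁿ`
to twice it gives a continuous injection `g`, hence a homeomorphism onto a compact `K ⊆ ℝ`.
Both summands being monotone, their increments between two points have the same sign, so the
binary increment is at most half the increment of `g`: the binary map, read on `K`, is Lipschitz
with image `[0,1]`. A compact totally disconnected space has a clopen basis, so `dimTH K = 0`.
In the connected space `[0,1]` a basic set separating two points is not clopen, so its frontier
is nonempty, which gives `dimTH [0,1] ≥ 1`; frontiers of intervals are finite, which gives `≤ 1`. -/

section dimTH

variable {X : Type*} [EMetricSpace X]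

theorem dimTH_le_of_isTopologicalBasis {B : Set (Set X)} {d : ℝ≥0∞} (hB : IsTopologicalBasis B)
    (hd : ∀ U ∈ B, frontier U = ∅ ∨ dimH (frontier U) + 1 ≤ d) : dimTH X ≤ d :=
  iInf₂_le d ⟨B, hB, hd⟩

theorem dimTH_eq_zero [CompactSpace X] [TotallyDisconnectedSpace X] : dimTH X = 0 :=
  nonpos_iff_eq_zero.mp <| dimTH_le_of_isTopologicalBasis isTopologicalBasis_isClopen
    fun _ hU => Or.inl hU.frontier_eq

theorem one_le_dimTH [ConnectedSpace X] [Nontrivial X] : 1 ≤ dimTH X := by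
  refine le_iInf₂ fun d ⟨B, hB, hd⟩ => ?_
  obtain ⟨p, q, hpq⟩ := exists_pair_ne X
  obtain ⟨U, hUB, hpU, hUq⟩ :=
    hB.exists_subset_of_mem_open (show p ∈ ({q}ᶜ : Set X) from hpq) isOpen_compl_singleton
  have hU : ¬IsClopen U := by
    rw [isClopen_iff]
    rintro (rfl | rfl)
    · exact hpU
    · exact hUq (mem_univ q) rfl
  rcases hd U hUB with hfr | hfr
  · exact absurd (isClopen_iff_frontier_eq_empty.mpr hfr) hU
  · exact le_add_self.trans hfr

end dimTH

theorem dimTH_le_one (s : Set ℝ) : dimTH s ≤ 1 := by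
  refine dimTH_le_of_isTopologicalBasis
    (Real.isTopologicalBasis_Ioo_rat.isInducing Topology.IsInducing.subtypeVal) ?_
  simp only [mem_image, mem_iUnion, mem_singleton_iff]
  rintro _ ⟨_, ⟨a, b, hab, rfl⟩, rfl⟩
  have hfr : (frontier (((↑) : s → ℝ) ⁻¹' Ioo (a : ℝ) b)).Countable := by
    refine ((countable_singleton (b : ℝ)).insert (a : ℝ)).preimage Subtype.val_injective
      |>.mono ?_
    rw [← frontier_Ioo (Rat.cast_lt.mpr hab)]
    exact continuous_subtype_val.frontier_preimage_subset _
  exact Or.inr (by rw [hfr.dimH_zero, zero_add])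

theorem dimTH_Icc_zero_one : dimTH (Icc (0 : ℝ) 1) = 1 := by
  have : ConnectedSpace (Icc (0 : ℝ) 1) := Subtype.connectedSpace (isConnected_Icc zero_le_one)
  have : Nontrivial (Icc (0 : ℝ) 1) :=
    nontrivial_coe_sort.mpr ⟨0, left_mem_Icc.mpr zero_le_one, 1, right_mem_Icc.mpr zero_le_one,
      zero_ne_one⟩
  exact le_antisymm (dimTH_le_one _) one_le_dimTH

namespace Cardinal

variable {c : ℝ}

theorem cantorFunction_nonneg (h0 : 0 ≤ c) (f : ℕ → Bool) : 0 ≤ cantorFunction c f :=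
  tsum_nonneg fun _ => cantorFunctionAux_nonneg h0

theorem cantorFunction_le_inv_one_sub (h0 : 0 ≤ c) (h1 : c < 1) (f : ℕ → Bool) :
    cantorFunction c f ≤ (1 - c)⁻¹ := by
  calc cantorFunction c f ≤ cantorFunction c fun _ => true :=
        cantorFunction_le h0 h1 fun _ _ => rfl
    _ = (1 - c)⁻¹ := by
        simp only [cantorFunction, cantorFunctionAux, cond_true]
        exact tsum_geometric_of_lt_one h0 h1

theorem cantorFunction_le_of_lex (h0 : 0 ≤ c) (h1 : c ≤ 1 / 2) {n : ℕ} {f g : ℕ → Bool}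
    (hn : ∀ k < n, f k = g k) (fn : f n = false) (gn : g n = true) :
    cantorFunction c f ≤ cantorFunction c g := by
  have hc1 : c < 1 := h1.trans_lt (by norm_num)
  induction n generalizing f g with
  | zero =>
    rw [cantorFunction_succ f h0 hc1, cantorFunction_succ g h0 hc1, fn, gn]
    have htail : c * cantorFunction c (fun n => f (n + 1)) ≤ 1 :=
      calc c * cantorFunction c (fun n => f (n + 1)) ≤ c * (1 - c)⁻¹ := by
            gcongr; exact cantorFunction_le_inv_one_sub h0 hc1 _
        _ ≤ 1 := by
            rw [← div_eq_mul_inv, div_le_one (by linarith)]; linarith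
    have := mul_nonneg h0 (cantorFunction_nonneg h0 fun n => g (n + 1))
    simp only [cond_false, cond_true]
    linarith
  | succ n ih =>
    rw [cantorFunction_succ f h0 hc1, cantorFunction_succ g h0 hc1, hn 0 n.succ_pos]
    gcongr
    exact ih (fun k hk => hn (k + 1) (Nat.succ_lt_succ hk)) fn gn

theorem monotone_cantorFunction_ofLex (h0 : 0 ≤ c) (h1 : c ≤ 1 / 2) :
    Monotone fun x : Lex (ℕ → Bool) => cantorFunction c (ofLex x) := by
  refine monotone_iff_forall_lt.mpr fun x y ⟨n, hn, hxy⟩ => ?_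
  obtain ⟨fn, gn⟩ := Bool.lt_iff.mp hxy
  exact cantorFunction_le_of_lex h0 h1 hn fn gn

theorem strictMono_cantorFunction_ofLex (h0 : 0 < c) (h1 : c < 1 / 2) :
    StrictMono fun x : Lex (ℕ → Bool) => cantorFunction c (ofLex x) := by
  rintro x y ⟨n, hn, hxy⟩
  obtain ⟨fn, gn⟩ := Bool.lt_iff.mp hxy
  exact increasing_cantorFunction h0 h1 hn fn gn

theorem continuous_cantorFunction (h0 : 0 ≤ c) (h1 : c < 1) : Continuous (cantorFunction c) := by
  refine continuous_tsum (u := (c ^ ·)) (fun n => ?_) (summable_geometric_of_lt_one h0 h1)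
    fun n f => ?_
  · exact (continuous_of_discreteTopology (f := fun b : Bool => cond b (c ^ n) 0)).comp
      (continuous_apply n)
  · rw [Real.norm_eq_abs, abs_of_nonneg (cantorFunctionAux_nonneg h0)]
    cases hn : f n <;> simp [cantorFunctionAux, hn, pow_nonneg h0]

theorem cantorFunction_half_div_two (f : ℕ → Bool) :
    cantorFunction (1 / 2) f / 2 = Real.ofDigits (finTwoEquiv.symm ∘ f) := by
  rw [cantorFunction, Real.ofDigits, ← tsum_div_const]
  congr 1
  ext n
  cases hn : f n <;> simp [cantorFunctionAux, Real.ofDigitsTerm, finTwoEquiv, hn, pow_succ]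
  ring

end Cardinal

theorem abs_sub_le_abs_add_sub_add {α : Type*} [LinearOrder α] {h t : α → ℝ} (hh : Monotone h)
    (ht : Monotone t) (a b : α) : |h a - h b| ≤ |h a + t a - (h b + t b)| := by
  rcases le_total a b with hab | hab
  · have := hh hab; have := ht hab
    rw [abs_of_nonpos (by linarith), abs_of_nonpos (by linarith)]
    linarith
  · have := hh hab; have := ht hab
    rw [abs_of_nonneg (by linarith), abs_of_nonneg (by linarith)]
    linarith

open Cardinal

noncomputable def cantorEmbedding (x : ℕ → Bool) : ℝ :=
  cantorFunction (1 / 2) x + cantorFunction (1 / 3) x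

theorem continuous_cantorEmbedding : Continuous cantorEmbedding :=
  (continuous_cantorFunction (by norm_num) (by norm_num)).add
    (continuous_cantorFunction (by norm_num) (by norm_num))

theorem cantorEmbedding_injective : Function.Injective cantorEmbedding := fun x y hxy =>
  ((monotone_cantorFunction_ofLex (by norm_num) le_rfl).add_strictMono
    (strictMono_cantorFunction_ofLex (by norm_num) (by norm_num))).injective
    (a₁ := toLex x) (a₂ := toLex y) hxy

theorem dist_ofDigits_le_dist_cantorEmbedding (x y : ℕ → Bool) :
    dist (Real.ofDigits (finTwoEquiv.symm ∘ x)) (Real.ofDigits (finTwoEquiv.symm ∘ y)) ≤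
      2⁻¹ * dist (cantorEmbedding x) (cantorEmbedding y) := by
  rw [Real.dist_eq, Real.dist_eq, ← cantorFunction_half_div_two, ← cantorFunction_half_div_two,
    ← _root_.sub_div, abs_div, abs_two, div_eq_inv_mul]
  refine mul_le_mul_of_nonneg_left ?_ (by norm_num)
  exact abs_sub_le_abs_add_sub_add (monotone_cantorFunction_ofLex (by norm_num) le_rfl)
    (monotone_cantorFunction_ofLex (c := 1 / 3) (by norm_num) (by norm_num)) (toLex x) (toLex y)

theorem range_ofDigits {b : ℕ} (hb : 1 < b) : range (Real.ofDigits (b := b)) = Icc 0 1 :=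
  Subset.antisymm (range_subset_iff.mpr fun d => ⟨Real.ofDigits_nonneg d, Real.ofDigits_le_one d⟩)
    fun t ht => by simpa using Real.ofDigits_SurjOn hb ht

/-- There is a compact set `K ⊆ ℝ` homeomorphic to the Cantor set and a Lipschitz
surjection of `K` onto `[0,1]`; consequently `dimTH K = 0` while the image has
topological Hausdorff dimension `1`. -/
theorem stmt6 :
    ∃ K : Set ℝ, IsCompact K ∧ Nonempty (K ≃ₜ (ℕ → Bool)) ∧
      ∃ (f : K → ℝ) (C : ℝ≥0), LipschitzWith C f ∧ Set.range f = Set.Icc (0 : ℝ) 1 ∧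
        dimTH K = 0 ∧ dimTH (Set.range f) = 1 := by
  set K := range cantorEmbedding
  have hK : IsCompact K := isCompact_range continuous_cantorEmbedding
  let e : (ℕ → Bool) ≃ₜ K :=
    (continuous_cantorEmbedding.isClosedEmbedding cantorEmbedding_injective).toHomeomorph
  have : CompactSpace K := isCompact_iff_compactSpace.mp hK
  have : TotallyDisconnectedSpace K := e.totallyDisconnectedSpace
  let f : K → ℝ := fun k => Real.ofDigits (finTwoEquiv.symm ∘ e.symm k)
  have hf : range f = Icc 0 1 := by
    rw [← range_ofDigits one_lt_two]
    exact (finTwoEquiv.symm.surjective.comp_left.comp e.symm.surjective).range_comp Real.ofDigits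
  refine ⟨K, hK, ⟨e.symm⟩, f, 2⁻¹, ?_, hf, dimTH_eq_zero, hf ▸ dimTH_Icc_zero_one⟩
  refine LipschitzWith.of_dist_le_mul fun a b => ?_
  have hval (k : K) : (k : ℝ) = cantorEmbedding (e.symm k) :=
    congrArg Subtype.val (e.apply_symm_apply k).symm
  rw [Subtype.dist_eq, hval a, hval b, NNReal.coe_inv, NNReal.coe_ofNat]
  exact dist_ofDigits_le_dist_cantorEmbedding _ _
end

section
/- Let X be a nonempty separable metric space. Then dim_tH X equals the infimum of all d such that there exists a subset A ⊆ X with dim_H A ≤ d−1 and such that X \ A has a topological basis consisting of sets with empty boundary (i.e. X \ A has topological dimension ≤ 0). Moreover this infimum is attained. -/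
open TopologicalSpace Set ENNReal NNReal MeasureTheory

/-!
A basis whose frontiers have dimension `≤ d - 1` contains a countable basis; the union `A` of
its frontiers has dimension `≤ d - 1`, and the basis sets trace clopen sets on `Aᶜ`. Conversely,
if `Aᶜ` is zero-dimensional, the separation theorem yields arbitrarily small neighbourhoods
whose frontiers miss `Aᶜ`, i.e. lie in `A`. For attainment, take such `Aₙ` for dimensions
decreasing to the infimum, enlarge them to `G_δ` sets `Hₙ` of the same Hausdorff dimension and
put `A = ⋂ Hₙ`: then `Aᶜ` is a countable union of closed sets, each inside a zero-dimensional
`Aₙᶜ`, hence zero-dimensional by the countable sum theorem.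
-/

open Filter Topology

section ZeroDimensional

variable {X : Type*} [TopologicalSpace X]

theorem isTopologicalBasis_isClopen_iff :
    IsTopologicalBasis {U : Set X | IsClopen U} ↔
      ∃ B : Set (Set X), IsTopologicalBasis B ∧ ∀ U ∈ B, frontier U = ∅ :=
  ⟨fun h => ⟨_, h, fun _ hU => isClopen_iff_frontier_eq_empty.1 hU⟩, fun ⟨_, hB, hfr⟩ =>
    hB.of_isOpen_of_subset (fun _ hU => hU.isOpen) fun U hU =>
      isClopen_iff_frontier_eq_empty.2 (hfr U hU)⟩

theorem TopologicalSpace.IsTopologicalBasis.isTopologicalBasis_isClopen_subtype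
    {B : Set (Set X)} {Z : Set X} (hB : IsTopologicalBasis B)
    (hBZ : ∀ U ∈ B, Disjoint (frontier U) Z) :
    IsTopologicalBasis {U : Set Z | IsClopen U} := by
  refine (hB.isInducing IsInducing.subtypeVal).of_isOpen_of_subset (fun _ hU => hU.isOpen) ?_
  rintro _ ⟨U, hU, rfl⟩
  refine isClopen_iff_frontier_eq_empty.2 (eq_empty_of_forall_notMem fun z hz => ?_)
  exact disjoint_left.1 (hBZ U hU) (continuous_subtype_val.frontier_preimage_subset U hz) z.2

theorem exists_isClopen_superset_disjoint [LindelofSpace X]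
    (hX : IsTopologicalBasis {U : Set X | IsClopen U}) {C D : Set X} (hC : IsClosed C)
    (hD : IsClosed D) (hCD : Disjoint C D) : ∃ W, IsClopen W ∧ C ⊆ W ∧ Disjoint W D := by
  rcases isEmpty_or_nonempty X with hempty | hne
  · exact ⟨∅, isClopen_empty, fun x _ => isEmptyElim x, empty_disjoint D⟩
  have hsmall : ∀ x, ∃ U, IsClopen U ∧ x ∈ U ∧ (Disjoint U C ∨ Disjoint U D) := fun x => by
    by_cases hxC : x ∈ C
    · obtain ⟨U, hU, hxU, hUD⟩ :=
        hX.exists_subset_of_mem_open (disjoint_left.1 hCD hxC) hD.isOpen_compl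
      exact ⟨U, hU, hxU, Or.inr (subset_compl_iff_disjoint_right.1 hUD)⟩
    · obtain ⟨U, hU, hxU, hUC⟩ := hX.exists_subset_of_mem_open hxC hC.isOpen_compl
      exact ⟨U, hU, hxU, Or.inl (subset_compl_iff_disjoint_right.1 hUC)⟩
  choose U hU hxU hUCD using hsmall
  obtain ⟨t, htc, htU⟩ :=
    LindelofSpace.elim_nhds_subcover U fun x => (hU x).isOpen.mem_nhds (hxU x)
  have ht : t.Nonempty := by
    by_contra h
    rw [not_nonempty_iff_eq_empty.1 h, biUnion_empty] at htU
    exact empty_ne_univ htU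
  obtain ⟨f, rfl⟩ := htc.exists_eq_range ht
  rw [biUnion_range] at htU
  set w := disjointed (U ∘ f)
  have hw : ∀ n, IsClopen (w n) :=
    fun n => disjointedRec (fun _ _ ht => ht.diff (hU _)) (hU (f n))
  have hwU : ⋃ n, w n = univ := iUnion_disjointed.trans htU
  have hw_unique : ∀ {x m n}, x ∈ w m → x ∈ w n → m = n := fun hm hn =>
    by_contra fun h => disjoint_left.1 (disjoint_disjointed _ h) hm hn
  set S := {n | Disjoint (U (f n)) D}
  have hW : (⋃ n ∈ S, w n) = (⋃ n ∈ Sᶜ, w n)ᶜ := by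
    ext x
    obtain ⟨n, hn⟩ := mem_iUnion.1 (hwU.symm ▸ mem_univ x)
    simp only [mem_iUnion, mem_compl_iff, exists_prop, not_exists, not_and]
    exact ⟨fun ⟨m, hm, hxm⟩ k hk hxk => hk (hw_unique hxm hxk ▸ hm),
      fun h => ⟨n, by_contra fun hnS => h n hnS hn, hn⟩⟩
  refine ⟨⋃ n ∈ S, w n, ⟨?_, isOpen_biUnion fun n _ => (hw n).isOpen⟩, fun x hx => ?_, ?_⟩
  · rw [hW]
    exact (isOpen_biUnion fun n _ => (hw n).isOpen).isClosed_compl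
  · obtain ⟨n, hn⟩ := mem_iUnion.1 (hwU.symm ▸ mem_univ x)
    refine mem_biUnion ((hUCD (f n)).resolve_left fun h => ?_) hn
    exact disjoint_left.1 h (disjointed_subset _ n hn) hx
  · exact disjoint_iUnion₂_left.2 fun n hn => hn.mono_left (disjointed_subset _ n)

/-- Any two disjoint closed sets are separated by a partition `X \ (U ∪ W)` disjoint from `Z`.
In a separable metric space this says that `Z` is zero-dimensional. -/
def PartitionsAvoid (Z : Set X) : Prop :=
  ∀ C D : Set X, IsClosed C → IsClosed D → Disjoint C D →
    ∃ U W : Set X, IsOpen U ∧ IsOpen W ∧ C ⊆ U ∧ D ⊆ W ∧ Disjoint U W ∧ Z ⊆ U ∪ W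

theorem PartitionsAvoid.mono {Z Z' : Set X} (h : PartitionsAvoid Z) (hZ' : Z' ⊆ Z) :
    PartitionsAvoid Z' := fun C D hC hD hCD =>
  let ⟨U, W, hU, hW, hCU, hDW, hUW, hZ⟩ := h C D hC hD hCD
  ⟨U, W, hU, hW, hCU, hDW, hUW, hZ'.trans hZ⟩

theorem PartitionsAvoid.isTopologicalBasis [T1Space X] {Z : Set X} (h : PartitionsAvoid Z) :
    IsTopologicalBasis {U : Set X | IsOpen U ∧ Disjoint (frontier U) Z} := by
  refine isTopologicalBasis_of_isOpen_of_nhds (fun U hU => hU.1) fun x V hxV hV => ?_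
  obtain ⟨U, W, hU, hW, hxU, hVW, hUW, hZ⟩ := h {x} Vᶜ isClosed_singleton hV.isClosed_compl
    (disjoint_singleton_left.2 fun h => h hxV)
  refine ⟨U, ⟨hU, ?_⟩, hxU rfl, fun y hy => by_contra fun hyV => disjoint_left.1 hUW hy (hVW hyV)⟩
  rw [hU.frontier_eq]
  exact disjoint_left.2 fun z ⟨hzU, hzU'⟩ hzZ =>
    (hZ hzZ).elim hzU' fun hzW => disjoint_left.1 (hUW.symm.closure_right hW) hzW hzU

theorem exists_isOpen_superset_disjoint_closure [NormalSpace X] {C D : Set X} (hC : IsClosed C)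
    (hD : IsClosed D) (hCD : Disjoint C D) :
    ∃ U W, IsOpen U ∧ IsOpen W ∧ C ⊆ U ∧ D ⊆ W ∧ Disjoint (closure U) (closure W) := by
  obtain ⟨U, hU, hCU, hUD⟩ := normal_exists_closure_subset hC hD.isOpen_compl
    (subset_compl_iff_disjoint_right.2 hCD)
  obtain ⟨V, hV, hUV, hVD⟩ := normal_exists_closure_subset isClosed_closure hD.isOpen_compl hUD
  refine ⟨U, (closure V)ᶜ, hU, isClosed_closure.isOpen_compl, hCU, subset_compl_comm.1 hVD, ?_⟩
  exact (disjoint_compl_right_iff_subset.2 subset_closure |>.closure_right hV).mono_left hUV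

theorem PartitionsAvoid.exists_extend [NormalSpace X] {F G H : Set X} (hF : PartitionsAvoid F)
    (hFc : IsClosed F) (hGH : Disjoint (closure G) (closure H)) :
    ∃ G' H', IsOpen G' ∧ IsOpen H' ∧ G ⊆ G' ∧ H ⊆ H' ∧ Disjoint (closure G') (closure H') ∧
      F ⊆ G' ∪ H' := by
  obtain ⟨U, V, hU, hV, hGU, hHV, hUV, hFUV⟩ := hF _ _ isClosed_closure isClosed_closure hGH
  -- `F \ V` and `F \ U` are closed and cover `F`
  have hdisj : Disjoint (closure G ∪ F \ V) (closure H ∪ F \ U) := by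
    refine disjoint_union_left.2 ⟨disjoint_union_right.2 ⟨hGH, ?_⟩, disjoint_union_right.2 ⟨?_, ?_⟩⟩
    · exact disjoint_left.2 fun z hzG hz => hz.2 (hGU hzG)
    · exact disjoint_right.2 fun z hzH hz => hz.2 (hHV hzH)
    · exact disjoint_left.2 fun z hzV hzU => (hFUV hzV.1).elim hzU.2 hzV.2
  obtain ⟨G', H', hG', hH', hGG', hHH', hGH'⟩ := exists_isOpen_superset_disjoint_closure
    (isClosed_closure.union (hFc.sdiff hV)) (isClosed_closure.union (hFc.sdiff hU)) hdisj
  refine ⟨G', H', hG', hH', subset_closure.trans (subset_union_left.trans hGG'),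
    subset_closure.trans (subset_union_left.trans hHH'), hGH', fun z hz => ?_⟩
  by_cases hzV : z ∈ V
  · exact Or.inr (hHH' (Or.inr ⟨hz, fun hzU => disjoint_left.1 hUV hzU hzV⟩))
  · exact Or.inl (hGG' (Or.inr ⟨hz, hzV⟩))

theorem PartitionsAvoid.iUnion_nat [NormalSpace X] {F : ℕ → Set X} (hFc : ∀ n, IsClosed (F n))
    (hF : ∀ n, PartitionsAvoid (F n)) : PartitionsAvoid (⋃ n, F n) := by
  intro C D hC hD hCD
  obtain ⟨G₀, H₀, hG₀, hH₀, hCG₀, hDH₀, hGH₀⟩ := exists_isOpen_superset_disjoint_closure hC hD hCD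
  choose! G' H' hG' hH' hGG' hHH' hGH' hFGH' using
    fun n (p : Set X × Set X) (hp : Disjoint (closure p.1) (closure p.2)) =>
      (hF n).exists_extend (hFc n) hp
  let seq : ℕ → Set X × Set X := fun n => Nat.rec (G₀, H₀) (fun n p => (G' n p, H' n p)) n
  have hseq : ∀ n, Disjoint (closure (seq n).1) (closure (seq n).2) := fun n => by
    induction n with
    | zero => exact hGH₀
    | succ n ih => exact hGH' n _ ih
  have hopen : ∀ n, IsOpen (seq n).1 ∧ IsOpen (seq n).2 := fun n => by
    cases n with
    | zero => exact ⟨hG₀, hH₀⟩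
    | succ n => exact ⟨hG' n _ (hseq n), hH' n _ (hseq n)⟩
  have hmono : Monotone seq :=
    monotone_nat_of_le_succ fun n => ⟨hGG' n _ (hseq n), hHH' n _ (hseq n)⟩
  refine ⟨⋃ n, (seq n).1, ⋃ n, (seq n).2, isOpen_iUnion fun n => (hopen n).1,
    isOpen_iUnion fun n => (hopen n).2, hCG₀.trans (subset_iUnion (fun n => (seq n).1) 0),
    hDH₀.trans (subset_iUnion (fun n => (seq n).2) 0), ?_, iUnion_subset fun n => ?_⟩
  · refine disjoint_iUnion_left.2 fun m => disjoint_iUnion_right.2 fun n => ?_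
    exact ((hseq (max m n)).mono subset_closure subset_closure).mono
      (hmono (le_max_left m n)).1 (hmono (le_max_right m n)).2
  · exact (hFGH' n _ (hseq n)).trans
      (union_subset_union (subset_iUnion (fun n => (seq n).1) (n + 1))
        (subset_iUnion (fun n => (seq n).2) (n + 1)))

theorem PartitionsAvoid.iUnion [NormalSpace X] {ι : Type*} [Countable ι] {F : ι → Set X}
    (hFc : ∀ i, IsClosed (F i)) (hF : ∀ i, PartitionsAvoid (F i)) :
    PartitionsAvoid (⋃ i, F i) := by
  rcases isEmpty_or_nonempty ι with hι | hι
  · rw [iUnion_of_empty]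
    intro C D hC hD hCD
    obtain ⟨U, W, hU, hW, hCU, hDW, hUW⟩ := normal_separation hC hD hCD
    exact ⟨U, W, hU, hW, hCU, hDW, hUW, empty_subset _⟩
  · obtain ⟨f, hf⟩ := exists_surjective_nat ι
    rw [← hf.iUnion_comp]
    exact iUnion_nat (fun n => hFc (f n)) fun n => hF (f n)

theorem disjoint_closure_image_val_compl {Z : Set X} {W : Set Z} (hW : IsClosed W) :
    Disjoint (closure (((↑) : Z → X) '' W)) ((↑) '' Wᶜ) := by
  refine disjoint_right.2 ?_
  rintro _ ⟨z, hzW, rfl⟩ hz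
  apply hzW
  rw [← hW.closure_eq, IsInducing.subtypeVal.closure_eq_preimage_closure_image]
  exact hz

theorem partitionsAvoid_of_isTopologicalBasis_isClopen [T5Space X] {Z : Set X}
    [LindelofSpace Z] (hZ : IsTopologicalBasis {U : Set Z | IsClopen U}) : PartitionsAvoid Z := by
  intro C D hC hD hCD
  obtain ⟨O₁, O₂, hO₁, hO₂, hCO₁, hDO₂, hO⟩ := exists_isOpen_superset_disjoint_closure hC hD hCD
  obtain ⟨W, hW, hO₁W, hWO₂⟩ := exists_isClopen_superset_disjoint hZ
    (isClosed_closure.preimage continuous_subtype_val)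
    (isClosed_closure.preimage continuous_subtype_val) (hO.preimage _)
  set P := ((↑) : Z → X) '' W
  set Q := ((↑) : Z → X) '' Wᶜ
  have hPQ : Disjoint (closure P) Q := disjoint_closure_image_val_compl hW.isClosed
  have hQP : Disjoint (closure Q) P := by
    simpa only [compl_compl] using disjoint_closure_image_val_compl hW.compl.isClosed
  have hO₁Q : Disjoint (closure O₁) Q := by
    refine disjoint_right.2 ?_
    rintro _ ⟨z, hzW, rfl⟩ hz
    exact hzW (hO₁W hz)
  have hPO₂ : Disjoint P (closure O₂) := by
    refine disjoint_left.2 ?_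
    rintro _ ⟨z, hzW, rfl⟩
    exact disjoint_left.1 hWO₂ hzW
  -- `O₁ ∪ P` and `O₂ ∪ Q` are separated sets, so complete normality separates them
  obtain ⟨U, V, hU, hV, hUO₁, hVO₂, hUV⟩ : SeparatedNhds (O₁ ∪ P) (O₂ ∪ Q) := by
    refine separatedNhds_iff_disjoint.2 (CompletelyNormalSpace.completely_normal ?_ ?_)
    · rw [closure_union]
      exact disjoint_union_left.2 ⟨disjoint_union_right.2 ⟨hO.mono_right subset_closure, hO₁Q⟩,
        disjoint_union_right.2 ⟨(hPO₂.mono_right subset_closure).closure_left hO₂, hPQ⟩⟩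
    · rw [closure_union]
      exact disjoint_union_left.2 ⟨disjoint_union_right.2 ⟨hO.mono_left subset_closure,
        (hO₁Q.mono_left subset_closure).closure_right hO₁⟩,
        disjoint_union_right.2 ⟨hPO₂, hQP.symm⟩⟩
  refine ⟨U, V, hU, hV, hCO₁.trans (subset_union_left.trans hUO₁),
    hDO₂.trans (subset_union_left.trans hVO₂), hUV, fun z hz => ?_⟩
  by_cases hzW : (⟨z, hz⟩ : Z) ∈ W
  · exact Or.inl (hUO₁ (Or.inr ⟨_, hzW, rfl⟩))
  · exact Or.inr (hVO₂ (Or.inr ⟨_, hzW, rfl⟩))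

theorem partitionsAvoid_iff_isTopologicalBasis_isClopen [T5Space X]
    [HereditarilyLindelofSpace X] {Z : Set X} :
    PartitionsAvoid Z ↔ IsTopologicalBasis {U : Set Z | IsClopen U} :=
  ⟨fun h => h.isTopologicalBasis.isTopologicalBasis_isClopen_subtype fun _ hU => hU.2,
    partitionsAvoid_of_isTopologicalBasis_isClopen⟩

end ZeroDimensional

section HausdorffMeasure

variable {X : Type*} [EMetricSpace X] [MeasurableSpace X] [BorelSpace X]

theorem exists_isOpen_cover_tsum_ediam_rpow_le {q : ℝ} (hq : 0 < q) {s : Set X}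
    (hs : μH[q] s = 0) {ε : ℝ≥0∞} (hε : 0 < ε) :
    ∃ u : ℕ → Set X, (∀ n, IsOpen (u n)) ∧ s ⊆ ⋃ n, u n ∧ (∀ n, Metric.ediam (u n) ≤ ε) ∧
      ∑' n, Metric.ediam (u n) ^ q ≤ ε := by
  have h2q : (2 : ℝ≥0∞) ^ q * 2 ≠ ⊤ :=
    mul_ne_top (rpow_ne_top_of_nonneg hq.le ofNat_ne_top) ofNat_ne_top
  set η := ε / (2 ^ q * 2)
  have hη : η ≠ 0 := (ENNReal.div_pos hε.ne' h2q).ne'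
  rw [Measure.hausdorffMeasure_apply] at hs
  obtain ⟨t, hst, htdiam, htsum⟩ : ∃ t : ℕ → Set X, s ⊆ ⋃ n, t n ∧
      (∀ n, Metric.ediam (t n) ≤ ε / 2) ∧
        ∑' n, ⨆ _ : (t n).Nonempty, Metric.ediam (t n) ^ q < η := by
    simpa only [iInf_lt_iff, exists_prop] using
      (ENNReal.iSup_eq_zero.1 (ENNReal.iSup_eq_zero.1 hs (ε / 2))
        (ENNReal.half_pos hε.ne')).trans_lt (pos_iff_ne_zero.2 hη)
  obtain ⟨w, hw, hwsum⟩ := ENNReal.exists_pos_sum_of_countable hη ℕ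
  have hlim : Tendsto (fun δ : ℝ≥0 => 2 * (δ : ℝ≥0∞)) (𝓝[>] 0) (𝓝 0) := by
    have : Continuous fun δ : ℝ≥0 => 2 * (δ : ℝ≥0∞) :=
      (ENNReal.continuous_const_mul ofNat_ne_top).comp ENNReal.continuous_coe
    simpa using this.tendsto 0 |>.mono_left nhdsWithin_le_nhds
  have hlimq : Tendsto (fun δ : ℝ≥0 => (2 * (δ : ℝ≥0∞)) ^ q) (𝓝[>] 0) (𝓝 0) := by
    have := ((ENNReal.continuous_rpow_const (y := q)).tendsto 0).comp hlim
    rwa [ENNReal.zero_rpow_of_pos hq] at this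
  -- thickening `t n` by `δ n` adds at most `2 ^ q * w n` to the sum
  choose δ hδ using fun n => ((hlim.eventually (ge_mem_nhds (ENNReal.half_pos hε.ne'))).and
    ((hlimq.eventually (ge_mem_nhds (ENNReal.coe_pos.2 (hw n)))).and self_mem_nhdsWithin)).exists
  refine ⟨fun n => Metric.thickening (δ n) (t n), fun n => Metric.isOpen_thickening,
    hst.trans (iUnion_mono fun n => Metric.self_subset_thickening (hδ n).2.2 _), fun n => ?_, ?_⟩
  · calc Metric.ediam (Metric.thickening (δ n) (t n)) ≤ Metric.ediam (t n) + 2 * δ n :=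
          Metric.ediam_thickening_le _
      _ ≤ ε / 2 + ε / 2 := add_le_add (htdiam n) (hδ n).1
      _ = ε := ENNReal.add_halves ε
  · have hle : ∀ n, Metric.ediam (Metric.thickening (δ n) (t n)) ^ q ≤
        2 ^ q * ((⨆ _ : (t n).Nonempty, Metric.ediam (t n) ^ q) + w n) := fun n => by
      refine (ENNReal.rpow_le_rpow (Metric.ediam_thickening_le _) hq.le).trans <|
        (add_rpow_le_two_rpow_mul_rpow_add_rpow _ _ hq.le).trans ?_
      gcongr
      · rcases (t n).eq_empty_or_nonempty with ht | ht
        · simp [ht, ENNReal.zero_rpow_of_pos hq]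
        · rw [iSup_pos ht]
      · exact (hδ n).2.1
    calc ∑' n, Metric.ediam (Metric.thickening (δ n) (t n)) ^ q
        ≤ 2 ^ q * ((∑' n, ⨆ _ : (t n).Nonempty, Metric.ediam (t n) ^ q) +
            ∑' n, (w n : ℝ≥0∞)) := by
          rw [← ENNReal.tsum_add, ← ENNReal.tsum_mul_left]
          exact ENNReal.tsum_le_tsum hle
      _ ≤ 2 ^ q * (η + η) := by gcongr
      _ = ε := by rw [← two_mul, ← mul_assoc, ENNReal.mul_div_cancel (by simp) h2q]

theorem exists_isGδ_superset_hausdorffMeasure_eq_zero {q : ℝ} (hq : 0 < q) {s : Set X}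
    (hs : μH[q] s = 0) : ∃ t, s ⊆ t ∧ IsGδ t ∧ μH[q] t = 0 := by
  choose u hu hsu hdiam hsum using fun k : ℕ =>
    exists_isOpen_cover_tsum_ediam_rpow_le hq hs (ENNReal.inv_pos.2 (natCast_ne_top k))
  refine ⟨⋂ k, ⋃ n, u k n, subset_iInter hsu, .iInter fun k => (isOpen_iUnion (hu k)).isGδ, ?_⟩
  refine le_antisymm ?_ zero_le
  calc μH[q] (⋂ k, ⋃ n, u k n) ≤ liminf (fun k => ∑' n, Metric.ediam (u k n) ^ q) atTop :=
        Measure.hausdorffMeasure_le_liminf_tsum q _ _ ENNReal.tendsto_inv_nat_nhds_zero u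
          (.of_forall hdiam) (.of_forall fun k => iInter_subset _ k)
    _ ≤ liminf (fun k : ℕ => (k : ℝ≥0∞)⁻¹) atTop := liminf_le_liminf (.of_forall hsum)
    _ = 0 := ENNReal.tendsto_inv_nat_nhds_zero.liminf_eq

end HausdorffMeasure

theorem exists_isGδ_superset_dimH_le {X : Type*} [EMetricSpace X] (s : Set X) :
    ∃ t, s ⊆ t ∧ IsGδ t ∧ dimH t ≤ dimH s := by
  borelize X
  let I := {q : ℚ // dimH s < ((q : ℝ).toNNReal : ℝ≥0∞)}
  have hI : ∀ i : I, 0 < ((i.1 : ℝ).toNNReal : ℝ) := fun i =>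
    NNReal.coe_pos.2 (ENNReal.coe_pos.1 (zero_le.trans_lt i.2))
  choose t hst ht hnull using fun i : I =>
    exists_isGδ_superset_hausdorffMeasure_eq_zero (hI i) (hausdorffMeasure_of_dimH_lt i.2)
  refine ⟨⋂ i, t i, subset_iInter hst, .iInter ht, le_of_forall_gt_imp_ge_of_dense fun c hc => ?_⟩
  obtain ⟨q, -, hsq, hqc⟩ := ENNReal.lt_iff_exists_rat_btwn.1 hc
  calc dimH (⋂ i, t i) ≤ dimH (t ⟨q, hsq⟩) := dimH_mono (iInter_subset t _)
    _ ≤ (q : ℝ).toNNReal :=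
        dimH_le_of_hausdorffMeasure_ne_top ((hnull ⟨q, hsq⟩).trans_ne zero_ne_top)
    _ ≤ c := hqc.le

section Decomposition

variable {X : Type*} [EMetricSpace X]

theorem eq_empty_or_dimH_add_one_le_of_subset {s t : Set X} {d : ℝ≥0∞} (hst : s ⊆ t)
    (ht : t = ∅ ∨ dimH t + 1 ≤ d) : s = ∅ ∨ dimH s + 1 ≤ d :=
  ht.imp (subset_eq_empty hst) (add_le_add (dimH_mono hst) le_rfl).trans

theorem eq_empty_or_dimH_add_one_le_biUnion {ι : Type*} {I : Set ι} (hI : I.Countable)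
    {s : ι → Set X} {d : ℝ≥0∞} (h : ∀ i ∈ I, s i = ∅ ∨ dimH (s i) + 1 ≤ d) :
    ⋃ i ∈ I, s i = ∅ ∨ dimH (⋃ i ∈ I, s i) + 1 ≤ d := by
  by_cases hd : 1 ≤ d
  · right
    rw [← ENNReal.le_sub_iff_add_le_right one_ne_top hd, dimH_bUnion hI]
    refine iSup₂_le fun i hi => ?_
    rcases h i hi with h | h
    · simp [h]
    · exact (ENNReal.le_sub_iff_add_le_right one_ne_top hd).2 h
  · left
    simp only [iUnion_eq_empty]
    exact fun i hi => (h i hi).resolve_right fun h' => hd (le_add_self.trans h')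

theorem eq_empty_or_dimH_add_one_le_iInter {s : ℕ → Set X} {d : ℕ → ℝ≥0∞}
    (h : ∀ n, s n = ∅ ∨ dimH (s n) + 1 ≤ d n) :
    ⋂ n, s n = ∅ ∨ dimH (⋂ n, s n) + 1 ≤ ⨅ n, d n := by
  by_cases hempty : ∃ n, s n = ∅
  · obtain ⟨n, hn⟩ := hempty
    exact Or.inl (subset_eq_empty (iInter_subset _ n) hn)
  · exact Or.inr (le_iInf fun n => (add_le_add (dimH_mono (iInter_subset _ n)) le_rfl).trans
      ((h n).resolve_left (not_exists.1 hempty n)))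

theorem exists_isGδ_superset_eq_empty_or_dimH_add_one_le {s : Set X} {d : ℝ≥0∞}
    (hs : s = ∅ ∨ dimH s + 1 ≤ d) : ∃ t, s ⊆ t ∧ IsGδ t ∧ (t = ∅ ∨ dimH t + 1 ≤ d) := by
  rcases hs with rfl | hs
  · exact ⟨∅, subset_rfl, IsGδ.empty, Or.inl rfl⟩
  · obtain ⟨t, hst, ht, hts⟩ := exists_isGδ_superset_dimH_le s
    exact ⟨t, hst, ht, Or.inr ((add_le_add hts le_rfl).trans hs)⟩

/-- `X` is the union of a set `A` with `dimH A ≤ d - 1` (where `dimH ∅ = -1`) and a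
zero-dimensional set. -/
def HasDecomposition (X : Type*) [EMetricSpace X] (d : ℝ≥0∞) : Prop :=
  ∃ A : Set X, (A = ∅ ∨ dimH A + 1 ≤ d) ∧
    ∃ B : Set (Set ↥(Aᶜ)), IsTopologicalBasis B ∧ ∀ U ∈ B, frontier U = ∅

theorem hasDecomposition_top : HasDecomposition X ⊤ :=
  ⟨univ, Or.inr le_top, ∅, isTopologicalBasis_of_isOpen_of_nhds (fun _ h => h.elim)
    fun a => (a.2 (mem_univ _)).elim, fun _ h => h.elim⟩

variable [SecondCountableTopology X]

theorem hasDecomposition_iff_partitionsAvoid {d : ℝ≥0∞} :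
    HasDecomposition X d ↔ ∃ A : Set X, (A = ∅ ∨ dimH A + 1 ≤ d) ∧ PartitionsAvoid Aᶜ := by
  simp only [HasDecomposition, ← isTopologicalBasis_isClopen_iff,
    partitionsAvoid_iff_isTopologicalBasis_isClopen]

theorem hasDecomposition_iff_exists_isTopologicalBasis {d : ℝ≥0∞} :
    HasDecomposition X d ↔ ∃ B : Set (Set X), IsTopologicalBasis B ∧
      ∀ U ∈ B, frontier U = ∅ ∨ dimH (frontier U) + 1 ≤ d := by
  constructor
  · rw [hasDecomposition_iff_partitionsAvoid]
    rintro ⟨A, hA, hAc⟩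
    refine ⟨_, hAc.isTopologicalBasis, fun U hU => ?_⟩
    exact eq_empty_or_dimH_add_one_le_of_subset (disjoint_compl_right_iff_subset.1 hU.2) hA
  · rintro ⟨B, hB, hBd⟩
    obtain ⟨B', hB'B, hB'c, hB'⟩ := hB.exists_countable
    refine ⟨⋃ U ∈ B', frontier U,
      eq_empty_or_dimH_add_one_le_biUnion hB'c fun U hU => hBd U (hB'B hU),
      isTopologicalBasis_isClopen_iff.1 (hB'.isTopologicalBasis_isClopen_subtype fun U hU =>
        disjoint_compl_right_iff_subset.2 (subset_biUnion_of_mem hU))⟩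

theorem hasDecomposition_iInf {d : ℕ → ℝ≥0∞} (h : ∀ n, HasDecomposition X (d n)) :
    HasDecomposition X (⨅ n, d n) := by
  simp only [hasDecomposition_iff_partitionsAvoid] at h ⊢
  choose A hAd hAc using h
  choose H hAH hH hHd using fun n => exists_isGδ_superset_eq_empty_or_dimH_add_one_le (hAd n)
  choose f hf hHf using fun n => isGδ_iff_eq_iInter_nat.1 (hH n)
  refine ⟨⋂ n, H n, eq_empty_or_dimH_add_one_le_iInter hHd, ?_⟩
  have hcompl : (⋂ n, H n)ᶜ = ⋃ p : ℕ × ℕ, (f p.1 p.2)ᶜ := by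
    simp only [compl_iInter, hHf, iUnion_prod']
  rw [hcompl]
  refine PartitionsAvoid.iUnion (fun p => (hf _ _).isClosed_compl) fun p => (hAc p.1).mono ?_
  exact compl_subset_compl.2 ((hHf p.1 ▸ hAH p.1).trans (iInter_subset _ p.2))

theorem hasDecomposition_iInf_hasDecomposition :
    HasDecomposition X (⨅ (d) (_ : HasDecomposition X d), d) := by
  obtain ⟨u, hu, hlim, huS⟩ :=
    exists_seq_tendsto_sInf ⟨⊤, hasDecomposition_top⟩ (OrderBot.bddBelow {d | HasDecomposition X d})
  have h_eq : ⨅ n, u n = ⨅ (d) (_ : HasDecomposition X d), d :=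
    (tendsto_nhds_unique (tendsto_atTop_iInf hu) hlim).trans sInf_eq_iInf
  rw [← h_eq]
  exact hasDecomposition_iInf huS

end Decomposition

theorem stmt9_general (X : Type*) [MetricSpace X] [SeparableSpace X] :
    (dimTH X = ⨅ (d : ℝ≥0∞) (_ : ∃ A : Set X,
        (A = ∅ ∨ dimH A + 1 ≤ d) ∧
        ∃ B : Set (Set ↥(Aᶜ)), IsTopologicalBasis B ∧ ∀ U ∈ B, frontier U = ∅), d) ∧
    ∃ A : Set X, (A = ∅ ∨ dimH A + 1 ≤ dimTH X) ∧
      ∃ B : Set (Set ↥(Aᶜ)), IsTopologicalBasis B ∧ ∀ U ∈ B, frontier U = ∅ := by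
  have hdim : dimTH X = ⨅ (d) (_ : HasDecomposition X d), d :=
    iInf_congr fun d => iInf_congr_Prop hasDecomposition_iff_exists_isTopologicalBasis.symm
      fun _ => rfl
  refine ⟨hdim, ?_⟩
  rw [hdim]
  exact hasDecomposition_iInf_hasDecomposition

/-- Decomposition theorem: for a nonempty separable metric space,
`dimTH X = inf {d : ∃ A ⊆ X, dimH A ≤ d - 1 and X \ A has a basis of sets with empty
boundary}`, and the infimum is attained. -/
theorem stmt9 (X : Type*) [MetricSpace X] [Nonempty X] [SeparableSpace X] :
    (dimTH X = ⨅ (d : ℝ≥0∞) (_ : ∃ A : Set X,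
        (A = ∅ ∨ dimH A + 1 ≤ d) ∧
        ∃ B : Set (Set ↥(Aᶜ)), IsTopologicalBasis B ∧ ∀ U ∈ B, frontier U = ∅), d) ∧
    ∃ A : Set X, (A = ∅ ∨ dimH A + 1 ≤ dimTH X) ∧
      ∃ B : Set (Set ↥(Aᶜ)), IsTopologicalBasis B ∧ ∀ U ∈ B, frontier U = ∅ :=
  stmt9_general X
end

section
/- Let K be a totally disconnected nonempty compact metric space. Then the set of injective functions is comeager in the Banach space C(K) of continuous real-valued functions on K with the supremum norm. -/
open TopologicalSpace Set ENNReal NNReal MeasureTheory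

/-!
For `r > 0` let `U r` be the set of functions that separate every two points at distance `≥ r`.
Injective functions form `⋂ₙ U (1/(n+1))`, so by Baire it suffices that each `U r` is open and
dense. Openness holds because the pairs at distance `≥ r` form a compact set. For density, total
disconnectedness cuts `K` into finitely many clopen pieces of small diameter on each of which `f`
varies little; the function taking pairwise distinct values close to `f` on the pieces is
continuous, near `f`, and lies in `U r`.
-/

open Filter Function Topology

theorem exists_injective_forall_dist_lt {ι : Type*} [Finite ι] (v : ι → ℝ) {ε : ℝ} (hε : 0 < ε) :
    ∃ c : ι → ℝ, Injective c ∧ ∀ i, dist (c i) (v i) < ε := by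
  obtain ⟨e, he⟩ := Countable.exists_injective_nat ι
  -- `v + t • e` is injective unless `t` is one of finitely many slopes
  set slopes := range fun p : {p : ι × ι // p.1 ≠ p.2} =>
    (v p.1.2 - v p.1.1) / ((e p.1.1 : ℝ) - e p.1.2)
  have h_inj : ∀ᶠ t in 𝓝[≠] (0 : ℝ), t ∉ slopes :=
    nhdsNE_le_cofinite 0 (finite_range _).eventually_cofinite_notMem
  have h_near : ∀ᶠ t in 𝓝[≠] (0 : ℝ), ∀ i, dist (v i + t * e i) (v i) < ε := by
    refine eventually_all.2 fun i => nhdsWithin_le_nhds (Metric.tendsto_nhds.1 ?_ ε hε)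
    simpa using ((tendsto_id (x := 𝓝 (0 : ℝ))).mul_const (e i : ℝ)).const_add (v i)
  obtain ⟨t, ht, ht_near⟩ := (h_inj.and h_near).exists
  refine ⟨fun i => v i + t * e i, fun i j hij => ?_, ht_near⟩
  by_contra hne
  have he_ne : (e i : ℝ) - e j ≠ 0 := sub_ne_zero.2 (Nat.cast_injective.ne (he.ne hne))
  exact ht ⟨⟨(i, j), hne⟩, (div_eq_iff he_ne).2 (by linarith)⟩

section FarSeparating

variable (K Y : Type*) [MetricSpace K] [TopologicalSpace Y]

def farSeparating (r : ℝ) : Set C(K, Y) := {f | ∀ x y, r ≤ dist x y → f x ≠ f y}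

variable {K Y}

theorem iInter_farSeparating_subset_injective :
    ⋂ n : ℕ, farSeparating K Y (1 / (n + 1)) ⊆ {f | Injective f} := by
  intro f hf x y hxy
  by_contra hne
  obtain ⟨n, hn⟩ := exists_nat_one_div_lt (dist_pos.2 hne)
  exact mem_iInter.1 hf n x y hn.le hxy

theorem isOpen_farSeparating [CompactSpace K] [T2Space Y] (r : ℝ) :
    IsOpen (farSeparating K Y r) := by
  set Z : Set (C(K, Y) × K × K) := {q | r ≤ dist q.2.1 q.2.2} ∩ {q | q.1 q.2.1 = q.1 q.2.2}
  have h_closed : IsClosed Z :=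
    (isClosed_le continuous_const (by fun_prop)).inter (isClosed_eq (by fun_prop) (by fun_prop))
  have h_compl : (farSeparating K Y r)ᶜ = Prod.fst '' Z := by
    ext f
    simp [farSeparating, Z]
  rw [← isClosed_compl_iff, h_compl]
  exact isClosedMap_fst_of_compactSpace _ h_closed

theorem dense_farSeparating [CompactSpace K] [TotallyDisconnectedSpace K] {r : ℝ} (hr : 0 < r) :
    Dense (farSeparating K ℝ r) := by
  rw [Metric.dense_iff]
  intro f ε hε
  set δ := min (r / 2) (ε / 2)
  have hδ : 0 < δ := by positivity
  have h_diag : {p : (K × ℝ) × (K × ℝ) | dist p.1 p.2 < δ} ∈ nhdsSet (diagonal (K × ℝ)) :=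
    (isOpen_lt continuous_dist continuous_const).mem_nhdsSet.2 fun p (hp : p.1 = p.2) => by
      simpa [hp] using hδ
  -- approximating the graph `x ↦ (x, f x)`: fibres of `g` are small and `f` is nearly constant on them
  obtain ⟨n, g, v, hg, hv⟩ :=
    ((ContinuousMap.id K).prodMk f).exists_finite_approximation_of_mem_nhds_diagonal h_diag
  have hgv x : dist x (v (g x)).1 < δ ∧ dist (f x) (v (g x)).2 < δ := by
    simpa [Prod.dist_eq] using hv x
  obtain ⟨c, hc, hcv⟩ := exists_injective_forall_dist_lt (fun i => (v i).2) (half_pos hε)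
  refine ⟨⟨c ∘ g, continuous_of_discreteTopology.comp hg⟩, ?_, fun x y hxy hcg => ?_⟩
  · rw [Metric.mem_ball, ContinuousMap.dist_lt_iff hε]
    intro x
    calc dist (c (g x)) (f x) ≤ dist (c (g x)) (v (g x)).2 + dist (f x) (v (g x)).2 :=
          dist_triangle_right _ _ _
      _ < ε / 2 + δ := add_lt_add (hcv _) (hgv x).2
      _ ≤ ε := by linarith [min_le_right (r / 2) (ε / 2)]
  · have hgxy : g x = g y := hc hcg
    have : dist x y < r := calc
      dist x y ≤ dist x (v (g x)).1 + dist y (v (g y)).1 := by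
          rw [hgxy]; exact dist_triangle_right _ _ _
      _ < δ + δ := add_lt_add (hgv x).1 (hgv y).1
      _ ≤ r := by linarith [min_le_left (r / 2) (ε / 2)]
    exact this.not_ge hxy

end FarSeparating

theorem stmt17_general (K : Type*) [MetricSpace K] [CompactSpace K]
    [TotallyDisconnectedSpace K] :
    {f : C(K, ℝ) | Function.Injective ⇑f} ∈ residual C(K, ℝ) := by
  have h_sep (n : ℕ) : farSeparating K ℝ (1 / (n + 1)) ∈ residual C(K, ℝ) :=
    residual_of_dense_open (isOpen_farSeparating _) (dense_farSeparating (by positivity))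
  exact mem_of_superset (countable_iInter_mem.2 h_sep) iInter_farSeparating_subset_injective

/-- On a nonempty totally disconnected compact metric space, the generic continuous
real-valued function is injective. -/
theorem stmt17 (K : Type*) [MetricSpace K] [CompactSpace K] [Nonempty K]
    [TotallyDisconnectedSpace K] :
    {f : C(K, ℝ) | Function.Injective ⇑f} ∈ residual C(K, ℝ) :=
  stmt17_general K
end

section
/- Let K be a nonempty compact metric space such that the set ℱ of 'd-level narrow' functions (continuous f : K → ℝ for which there is a dense set S_f ⊆ ℝ with dim_H f⁻¹(y) ≤ d−1 for all y ∈ S_f) is somewhere dense in C(K). Then for every x₀ ∈ K and r > 0 with ∂U(x₀,r) ≠ ∅ there exists an open set U with x₀ ∈ U ⊆ U(x₀,r) and dim_H(∂U) ≤ d−1; i.e. K has a basis of open sets whose boundaries have Hausdorff dimension at most d−1. -/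
/-!
Fix `x₀`, `r` and a ball `B(f₀, ε)` of `C(K)` inside the closure of the narrow functions.
Adding to `f₀` a multiple of a bump which vanishes at `x₀` and equals `1` on a small sphere
around `x₀` gives a function `h ∈ B(f₀, ε)` that jumps by a definite amount from `x₀` to that
sphere. A narrow `g` close enough to `h` keeps a gap between `g x₀` and the values of `g` on the
sphere, and the gap contains a value `s` whose level set is small. The sublevel set `{g < s}`,
cut down to the ball, then has its frontier inside `g⁻¹{s}`.
-/

open TopologicalSpace Set ENNReal NNReal MeasureTheory

open Metric

section Narrow

variable {X : Type*} [EMetricSpace X]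

/-- `dimH A ≤ d - 1` with the convention `dimH ∅ = -1`; stated additively because subtraction
in `ℝ≥0∞` truncates. -/
def DimHLeSubOne (d : ℝ≥0∞) (A : Set X) : Prop :=
  A = ∅ ∨ dimH A + 1 ≤ d

def LevelNarrow (d : ℝ≥0∞) (f : X → ℝ) : Prop :=
  ∃ S : Set ℝ, Dense S ∧ ∀ y ∈ S, DimHLeSubOne d (f ⁻¹' {y})

theorem DimHLeSubOne.mono {d : ℝ≥0∞} {A B : Set X} (hB : DimHLeSubOne d B) (hAB : A ⊆ B) :
    DimHLeSubOne d A := by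
  rcases hB with hB | hB
  · exact Or.inl (subset_empty_iff.1 (hB ▸ hAB))
  · exact Or.inr ((add_le_add_left (dimH_mono hAB) 1).trans hB)

end Narrow

theorem frontier_setOf_lt_inter_subset {X α : Type*} [TopologicalSpace X] [TopologicalSpace α]
    [LinearOrder α] [OrderClosedTopology α] {g : X → α} (hg : Continuous g) {V : Set X} {s : α}
    (hV : ∀ x ∈ frontier V, s < g x) :
    frontier ({x | g x < s} ∩ V) ⊆ g ⁻¹' {s} := by
  intro x hx
  rcases frontier_inter_subset _ _ hx with ⟨hxs, -⟩ | ⟨hxs, hxV⟩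
  · exact frontier_lt_subset_eq hg continuous_const hxs
  · exact absurd (closure_lt_subset_le hg continuous_const hxs) (hV x hxV).not_ge

theorem isTopologicalBasis_setOf_isOpen_of_forall_ball {X : Type*} [PseudoMetricSpace X]
    {P : Set X → Prop}
    (hP : ∀ (x : X) (r : ℝ), 0 < r → ∃ U, IsOpen U ∧ x ∈ U ∧ U ⊆ ball x r ∧ P U) :
    IsTopologicalBasis {U | IsOpen U ∧ P U} := by
  refine isTopologicalBasis_of_isOpen_of_nhds (fun U hU => hU.1) fun x V hxV hV => ?_
  obtain ⟨r, hr, hrV⟩ := isOpen_iff.1 hV x hxV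
  obtain ⟨U, hUo, hxU, hUr, hPU⟩ := hP x r hr
  exact ⟨U, ⟨hUo, hPU⟩, hxU, hUr.trans hrV⟩

theorem ContinuousMap.exists_dist_lt_add_lt_on_sphere {K : Type*} [PseudoMetricSpace K]
    [CompactSpace K] (f₀ : C(K, ℝ)) (x₀ : K) {r ε : ℝ}
    (hr : 0 < r) (hε : 0 < ε) :
    ∃ h : C(K, ℝ), dist h f₀ < ε ∧ ∃ r' η : ℝ, 0 < r' ∧ r' ≤ r ∧ 0 < η ∧
      ∀ x ∈ sphere x₀ r', h x₀ + 3 * η < h x := by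
  obtain ⟨r₁, hr₁, hf₀⟩ := Metric.continuousAt_iff.1 (f₀.continuous.continuousAt (x := x₀))
    (ε / 8) (by positivity)
  set r' := min r r₁ / 2 with hr'_def
  have hr' : 0 < r' := half_pos (lt_min hr hr₁)
  let bump : C(K, ℝ) := ⟨fun x => min (dist x x₀ / r') 1, by fun_prop⟩
  have hbump₀ : bump x₀ = 0 := by simp [bump]
  have hbump_sphere : ∀ x ∈ sphere x₀ r', bump x = 1 := fun x hx => by
    simp [bump, mem_sphere.1 hx, div_self hr'.ne']
  have hbump_mem : ∀ x, bump x ∈ Icc (0 : ℝ) 1 := fun x =>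
    ⟨le_min (by positivity) zero_le_one, min_le_right _ _⟩
  refine ⟨f₀ + (ε / 2) • bump, ?_, r', ε / 8, hr', ?_, by positivity, fun x hx => ?_⟩
  · have hle : dist (f₀ + (ε / 2) • bump) f₀ ≤ ε / 2 := by
      refine (ContinuousMap.dist_le (by positivity)).2 fun x => ?_
      have := hbump_mem x
      simp only [ContinuousMap.add_apply, ContinuousMap.smul_apply, smul_eq_mul, Real.dist_eq,
        add_sub_cancel_left, abs_mul, abs_of_pos (half_pos hε), abs_of_nonneg this.1]
      nlinarith [this.2]
    linarith
  · linarith [min_le_left r r₁]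
  · have hx₁ : dist x x₀ < r₁ := by
      rw [mem_sphere.1 hx]; linarith [min_le_right r r₁]
    have := (abs_lt.1 (Real.dist_eq _ _ ▸ hf₀ hx₁)).1
    simp only [ContinuousMap.add_apply, ContinuousMap.smul_apply, smul_eq_mul, hbump₀,
      hbump_sphere x hx]
    linarith

theorem exists_isOpen_mem_subset_ball_dimHLeSubOne {K : Type*} [MetricSpace K] [CompactSpace K]
    {d : ℝ≥0∞} {O : Set C(K, ℝ)}
    (hO : IsOpen O) (hOne : O.Nonempty) (hOF : O ⊆ closure {f | LevelNarrow d ⇑f})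
    (x₀ : K) {r : ℝ} (hr : 0 < r) :
    ∃ U, IsOpen U ∧ x₀ ∈ U ∧ U ⊆ ball x₀ r ∧ DimHLeSubOne d (frontier U) := by
  obtain ⟨f₀, hf₀⟩ := hOne
  obtain ⟨ε, hε, hεO⟩ := isOpen_iff.1 hO f₀ hf₀
  obtain ⟨h, hhf₀, r', η, hr', hr'r, hη, hjump⟩ := f₀.exists_dist_lt_add_lt_on_sphere x₀ hr hε
  obtain ⟨g, ⟨S, hS, hSlevel⟩, hhg⟩ := mem_closure_iff.1 (hOF (hεO hhf₀)) η hη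
  have hgh : ∀ x, |g x - h x| < η := fun x => by
    rw [← Real.dist_eq, dist_comm]
    exact (ContinuousMap.dist_apply_le_dist x).trans_lt hhg
  obtain ⟨s, hsS, hs₁, hs₂⟩ := hS.exists_between (by linarith : h x₀ + η < h x₀ + 2 * η)
  have hgx₀ : g x₀ < s := by linarith [(abs_lt.1 (hgh x₀)).2]
  have hg_sphere : ∀ x ∈ sphere x₀ r', s < g x := fun x hx => by
    linarith [(abs_lt.1 (hgh x)).1, hjump x hx]
  refine ⟨{x | g x < s} ∩ ball x₀ r', (isOpen_lt g.continuous continuous_const).inter isOpen_ball,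
    ⟨hgx₀, mem_ball_self hr'⟩, inter_subset_right.trans (ball_subset_ball hr'r), ?_⟩
  exact (hSlevel s hsS).mono <| frontier_setOf_lt_inter_subset g.continuous
    fun x hx => hg_sphere x (frontier_ball_subset_sphere hx)

theorem stmt19_general (K : Type*) [MetricSpace K] [CompactSpace K] (d : ℝ≥0∞)
    (hdense : ∃ O : Set C(K, ℝ), IsOpen O ∧ O.Nonempty ∧
      O ⊆ closure {f : C(K, ℝ) | ∃ S : Set ℝ, Dense S ∧
        ∀ y ∈ S, ⇑f ⁻¹' {y} = ∅ ∨ dimH (⇑f ⁻¹' {y}) + 1 ≤ d}) :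
    (∀ (x₀ : K) (r : ℝ), 0 < r → frontier (Metric.ball x₀ r) ≠ ∅ →
      ∃ U : Set K, IsOpen U ∧ x₀ ∈ U ∧ U ⊆ Metric.ball x₀ r ∧
        (frontier U = ∅ ∨ dimH (frontier U) + 1 ≤ d)) ∧
    ∃ B : Set (Set K), IsTopologicalBasis B ∧
      ∀ U ∈ B, frontier U = ∅ ∨ dimH (frontier U) + 1 ≤ d := by
  obtain ⟨O, hO, hOne, hOF⟩ := hdense
  have hlocal := fun x₀ (r : ℝ) (hr : 0 < r) =>
    exists_isOpen_mem_subset_ball_dimHLeSubOne (d := d) hO hOne hOF x₀ hr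
  exact ⟨fun x₀ r hr _ => hlocal x₀ r hr,
    _, isTopologicalBasis_setOf_isOpen_of_forall_ball hlocal, fun U hU => hU.2⟩

/-- If the set of `d`-level narrow functions is somewhere dense in `C(K)`, then every
point has arbitrarily small open neighborhoods with boundaries of Hausdorff dimension
at most `d - 1`; in fact `K` has a basis of such sets. -/
theorem stmt19 (K : Type*) [MetricSpace K] [CompactSpace K] [Nonempty K] (d : ℝ≥0∞)
    (hdense : ∃ O : Set C(K, ℝ), IsOpen O ∧ O.Nonempty ∧
      O ⊆ closure {f : C(K, ℝ) | ∃ S : Set ℝ, Dense S ∧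
        ∀ y ∈ S, ⇑f ⁻¹' {y} = ∅ ∨ dimH (⇑f ⁻¹' {y}) + 1 ≤ d}) :
    (∀ (x₀ : K) (r : ℝ), 0 < r → frontier (Metric.ball x₀ r) ≠ ∅ →
      ∃ U : Set K, IsOpen U ∧ x₀ ∈ U ∧ U ⊆ Metric.ball x₀ r ∧
        (frontier U = ∅ ∨ dimH (frontier U) + 1 ≤ d)) ∧
    ∃ B : Set (Set K), IsTopologicalBasis B ∧
      ∀ U ∈ B, frontier U = ∅ ∨ dimH (frontier U) + 1 ≤ d :=
  stmt19_general K d hdense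
end
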